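/- arXiv:1705.10243 — 4 statements merged into one kernel-verified Lean document; each statement's English description precedes it below -/
import Mathlib

section
/- Let the grid on X, Y be endowed with a unique sink orientation, and let v = (x, y) and w be vertices. If x ∈ Φ_X(w) and y ∈ Φ_Y(w) (i.e. both coordinates of v belong to the outmap Φ(w)), then there is a nonempty directed path from w to v, i.e. w →⁺ v. -/
open Finset

/-- An assignment of directions to the edges of the grid on `X`, `Y`:
`out u v = true` means the edge between `u` and `v` is directed from `u` to `v`. -/
structure GridOrientation (X Y : Type) where
  out : X × Y → X × Y → Bool

namespace GridOrientation

variable {X Y : Type} [Fintype X] [Fintype Y] [DecidableEq X] [DecidableEq Y]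

/-- Two distinct vertices of the grid are adjacent iff they agree in one coordinate. -/
def Adj (u v : X × Y) : Prop := u ≠ v ∧ (u.1 = v.1 ∨ u.2 = v.2)

/-- `out` is a genuine orientation of the grid: directed edges go along edges of the
grid, and each edge gets exactly one direction. -/
def IsOrientation (o : GridOrientation X Y) : Prop :=
  (∀ u v, o.out u v = true → Adj u v) ∧
  (∀ u v, Adj u v → (o.out u v = true ↔ ¬ o.out v u = true))

/-- `v` is a sink of the face `A × B`. -/
def IsFaceSink (o : GridOrientation X Y) (A : Finset X) (B : Finset Y) (v : X × Y) : Prop :=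
  v.1 ∈ A ∧ v.2 ∈ B ∧ ∀ u : X × Y, u.1 ∈ A → u.2 ∈ B → ¬ o.out v u = true

/-- A unique sink orientation: an orientation such that every nonempty face has a
unique sink. -/
def IsUSO (o : GridOrientation X Y) : Prop :=
  o.IsOrientation ∧
  ∀ (A : Finset X) (B : Finset Y), A.Nonempty → B.Nonempty →
    ∃! v : X × Y, o.IsFaceSink A B v

/-- `Φ_X(v)`. -/
def phiX (o : GridOrientation X Y) (v : X × Y) : Finset X :=
  Finset.univ.filter fun x => o.out v (x, v.2) = true

/-- `Φ_Y(v)`. -/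
def phiY (o : GridOrientation X Y) (v : X × Y) : Finset Y :=
  Finset.univ.filter fun y => o.out v (v.1, y) = true

/-- `Φ(v) = Φ_X(v) ∪ Φ_Y(v) ⊆ X ⊔ Y`. -/
def phi (o : GridOrientation X Y) (v : X × Y) : Finset (X ⊕ Y) :=
  (o.phiX v).disjSum (o.phiY v)

/-- `u →⁺ v`: there is a nonempty directed path from `u` to `v`. -/
def Reaches (o : GridOrientation X Y) (u v : X × Y) : Prop :=
  Relation.TransGen (fun a b => o.out a b = true) u v

/-- A (global) sink: a vertex with no outgoing edge. -/
def IsSink (o : GridOrientation X Y) (v : X × Y) : Prop :=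
  ∀ u : X × Y, ¬ o.out v u = true

/-- The out-neighbor `v⟨h⟩` of `v` determined by the pivot `h ∈ X ⊔ Y`. -/
def pivotStep (v : X × Y) : X ⊕ Y → X × Y
  | Sum.inl x => (x, v.2)
  | Sum.inr y => (v.1, y)

/-- `f` is the expected-hitting-time function of the set `W`: it vanishes on `W` and
satisfies the one-step recurrence off `W`. -/
def IsHittingTimeFun (o : GridOrientation X Y) (W : Set (X × Y)) (f : X × Y → ℝ) : Prop :=
  (∀ v ∈ W, f v = 0) ∧
  ∀ v ∉ W, f v = 1 + (1 / ((o.phi v).card : ℝ)) *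
      ∑ u : X × Y, (if o.out v u then f u else 0)

/-- `w` is the `i`-th milestone vertex: for `i = 0` the global sink, for `i ≥ 1` the
vertex of refined out-degree `(2^(i-1), 2^(i-1))`. -/
def IsMilestone (o : GridOrientation X Y) (i : ℕ) (w : X × Y) : Prop :=
  if i = 0 then o.IsSink w
  else (o.phiX w).card = 2 ^ (i - 1) ∧ (o.phiY w).card = 2 ^ (i - 1)

/-- The milestone set `W^i` associated with the `i`-th milestone vertex `w`. -/
def milestoneSet (o : GridOrientation X Y) (i : ℕ) (w : X × Y) : Set (X × Y) :=
  if i = 0 then {w} else {v | o.Reaches w v}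

end GridOrientation

/-- `L = 1 + ⌊log₂ min (|X|-1) (|Y|-1)⌋`, the number of milestones. -/
def gridL (X Y : Type) [Fintype X] [Fintype Y] : ℕ :=
  1 + Nat.log 2 (min (Fintype.card X - 1) (Fintype.card Y - 1))

/-- The `n`-th harmonic number, as a real number. -/
noncomputable def harmonicR (n : ℕ) : ℝ := ∑ k ∈ Finset.range n, 1 / (k + 1)

/-- In a grid USO, if both coordinates of the vertex `v = (x, y)`
belong to the outmap of `w` (`x ∈ Φ_X(w)` and `y ∈ Φ_Y(w)`), then `w →⁺ v`. -/
theorem reaches_of_coords_in_outmap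
    {X Y : Type} [Fintype X] [Fintype Y] [DecidableEq X] [DecidableEq Y]
    (hX : 2 ≤ Fintype.card X) (hY : 2 ≤ Fintype.card Y)
    (o : GridOrientation X Y) (huso : o.IsUSO)
    (x : X) (y : Y) (w : X × Y)
    (hx : x ∈ o.phiX w) (hy : y ∈ o.phiY w) :
    o.Reaches w (x, y) := by
  obtain ⟨horient, huniq⟩ := huso
  obtain ⟨hadj, hflip⟩ := horient
  simp only [GridOrientation.phiX, Finset.mem_filter] at hx
  simp only [GridOrientation.phiY, Finset.mem_filter] at hy
  have hw1 : o.out w (x, w.2) = true := hx.2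
  have hw2 : o.out w (w.1, y) = true := hy.2
  have hxa : x ≠ w.1 := by
    intro h; exact (hadj _ _ hw1).1 (by simp [h])
  have hyb : y ≠ w.2 := by
    intro h; exact (hadj _ _ hw2).1 (by simp [h])
  -- no self-loops
  have hself : ∀ v : X × Y, ¬ o.out v v = true := fun v h => (hadj _ _ h).1 rfl
  by_cases h1 : o.out (x, w.2) (x, y) = true
  · exact Relation.TransGen.tail (Relation.TransGen.single hw1) h1
  by_cases h2 : o.out (w.1, y) (x, y) = true
  · exact Relation.TransGen.tail (Relation.TransGen.single hw2) h2
  exfalso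
  have hadj1 : GridOrientation.Adj (x, w.2) (x, y) :=
    ⟨by simp [Ne.symm hyb], Or.inl rfl⟩
  have hadj2 : GridOrientation.Adj (w.1, y) (x, y) :=
    ⟨by simp [Ne.symm hxa], Or.inr rfl⟩
  -- reverse edges from (x,y)
  have hr1 : o.out (x, y) (x, w.2) = true := by
    by_contra hc
    exact h1 ((hflip _ _ hadj1).mpr hc)
  have hr2 : o.out (x, y) (w.1, y) = true := by
    by_contra hc
    exact h2 ((hflip _ _ hadj2).mpr hc)
  -- reversed edges from w
  have hrw1 : ¬ o.out (x, w.2) w = true := by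
    intro hc
    exact ((hflip _ _ (hadj _ _ hw1)).mp hw1) hc
  have hrw2 : ¬ o.out (w.1, y) w = true := by
    intro hc
    exact ((hflip _ _ (hadj _ _ hw2)).mp hw2) hc
  have hrx : ¬ o.out (x, w.2) (x, y) = true := h1
  have hry : ¬ o.out (w.1, y) (x, y) = true := h2
  -- the two intermediate vertices are not adjacent
  have hnadj : ¬ o.out (x, w.2) (w.1, y) = true := by
    intro hc
    rcases (hadj _ _ hc).2 with h | h
    · exact hxa h
    · exact hyb h.symm
  have hnadj' : ¬ o.out (w.1, y) (x, w.2) = true := by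
    intro hc
    rcases (hadj _ _ hc).2 with h | h
    · exact hxa h.symm
    · exact hyb h
  set A : Finset X := {w.1, x} with hA
  set B : Finset Y := {w.2, y} with hB
  obtain ⟨s, _, hs⟩ := huniq A B ⟨w.1, by simp [hA]⟩ ⟨w.2, by simp [hB]⟩
  have sink1 : o.IsFaceSink A B (x, w.2) := by
    refine ⟨by simp [hA], by simp [hB], ?_⟩
    rintro ⟨u1, u2⟩ hu1 hu2
    simp only [hA, hB, Finset.mem_insert, Finset.mem_singleton] at hu1 hu2
    rcases hu1 with rfl | rfl <;> rcases hu2 with rfl | rfl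
    · exact hrw1
    · exact hnadj
    · exact hself _
    · exact hrx
  have sink2 : o.IsFaceSink A B (w.1, y) := by
    refine ⟨by simp [hA], by simp [hB], ?_⟩
    rintro ⟨u1, u2⟩ hu1 hu2
    simp only [hA, hB, Finset.mem_insert, Finset.mem_singleton] at hu1 hu2
    rcases hu1 with rfl | rfl <;> rcases hu2 with rfl | rfl
    · exact hrw2
    · exact hself _
    · exact hnadj'
    · exact hry
  have := (hs _ sink1).trans (hs _ sink2).symm
  exact hxa (congrArg Prod.fst this)
end

section
/- Let the grid on X, Y be endowed with a unique sink orientation, and let v = (x, y) and w be vertices. If there is a nonempty directed path from w to v (i.e. w →⁺ v), then at least one coordinate of v belongs to the outmap of w: x ∈ Φ_X(w) or y ∈ Φ_Y(w). -/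
open Finset

/-!
A grid USO is acyclic. Rows and columns are linearly ordered (unique sinks of `1 × 3` faces), and
in a `2 × 2` face the two row edges and the two column edges are never both antiparallel. A shortest
directed cycle therefore turns at every vertex and is a staircase `(a 0, b 0) → (a 1, b 0) → (a 1, b 1) → ⋯` admitting no shortcut. Minimality
forces the fourth corners of consecutive squares of the staircase to alternate between sources and
sinks; along the sink corners the column edges propagate to `(a i, b i) → (a i, b (i + k))` for all
`k`, which is a loop once `b (i + k) = b i`.

Given this, if `x ∉ Φ_X(w)` and `y ∉ Φ_Y(w)`, then `w` is the sink of the face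
`{w.1, x} × {w.2, y}`, so `(x, y)`, if it is not `w` itself, has an edge to a vertex in the row or
column of `w`, which in turn is `w` or points to `w`; with `w →⁺ (x, y)` this closes a directed
cycle.
-/

namespace Relation

variable {α : Type*} {r : α → α → Prop} {n : ℕ} {f : ℕ → α}

structure IsClosedWalk (r : α → α → Prop) (n : ℕ) (f : ℕ → α) : Prop where
  pos : 0 < n
  periodic : Function.Periodic f n
  rel : ∀ i, r (f i) (f (i + 1))

def NoShortcut (r : α → α → Prop) (f : ℕ → α) : Prop :=
  ∀ i z, r (f i) z → ¬ r z (f (i + 3))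

theorem isClosedWalk_of_path {g : ℕ → α} (hn : 0 < n) (hg : ∀ k < n, r (g k) (g (k + 1)))
    (hcl : g n = g 0) : IsClosedWalk r n (fun i => g (i % n)) := by
  refine ⟨hn, fun i => by simp only [Nat.add_mod_right], fun i => ?_⟩
  have hi : i % n + 1 ≤ n := Nat.mod_lt i hn
  rw [← Nat.mod_add_mod i n 1]
  rcases hi.lt_or_eq with hlt | heq
  · rw [Nat.mod_eq_of_lt hlt]
    exact hg _ (Nat.mod_lt i hn)
  · have h := hg _ (Nat.mod_lt i hn)
    rw [heq, Nat.mod_self, ← hcl]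
    rwa [heq] at h

theorem TransGen.exists_path {a b : α} (h : TransGen r a b) :
    ∃ (n : ℕ) (g : ℕ → α), g 0 = a ∧ g (n + 1) = b ∧ ∀ k ≤ n, r (g k) (g (k + 1)) := by
  induction h using TransGen.head_induction_on with
  | @single a hab => exact ⟨0, fun k => if k = 0 then a else b, rfl, rfl, by simpa using hab⟩
  | @head a c hac _ ih =>
    obtain ⟨n, g, hg₀, hg, hrel⟩ := ih
    refine ⟨n + 1, fun | 0 => a | k + 1 => g k, rfl, hg, fun k hk => ?_⟩
    rcases k with _ | k
    · simpa [hg₀] using hac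
    · exact hrel k (by omega)

theorem TransGen.exists_isClosedWalk {a : α} (h : TransGen r a a) :
    ∃ n f, IsClosedWalk r n f := by
  obtain ⟨n, g, hg₀, hg, hrel⟩ := h.exists_path
  exact ⟨n + 1, _,
    isClosedWalk_of_path n.succ_pos (fun k hk => hrel k (by omega)) (hg.trans hg₀.symm)⟩

namespace IsClosedWalk

theorem comp_add (hf : IsClosedWalk r n f) (k : ℕ) : IsClosedWalk r n (fun i => f (i + k)) :=
  ⟨hf.pos, hf.periodic.add_const k,
    fun i => by simpa only [Nat.add_right_comm] using hf.rel (i + k)⟩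

theorem three_le (hf : IsClosedWalk r n f) (hr : ∀ a b, r a b → ¬ r b a) : 3 ≤ n := by
  by_contra! hn
  obtain rfl | rfl : n = 1 ∨ n = 2 := by have := hf.pos; omega
  · have h : r (f 0) (f 0) := hf.periodic 0 ▸ hf.rel 0
    exact hr _ _ h h
  · have h : r (f 1) (f 0) := hf.periodic 0 ▸ hf.rel 1
    exact hr _ _ (hf.rel 0) h

theorem noShortcut (hf : IsClosedWalk r n f) (hr : ∀ a b, r a b → ¬ r b a)
    (hmin : ∀ m < n, ∀ g, ¬ IsClosedWalk r m g) : NoShortcut r f := by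
  intro i z h₁ h₂
  have hn := hf.three_le hr
  refine hmin (n - 1) (by omega) _ (isClosedWalk_of_path (g := fun k => if k = 0 then f i
    else if k = 1 then z else f (i + k + 1)) (by omega) (fun k hk => ?_) ?_)
  · rcases k with _ | _ | k
    · simpa using h₁
    · simpa using h₂
    · simpa [Nat.add_assoc] using hf.rel (i + (k + 3))
  · simp only [show n - 1 ≠ 0 by omega, show n - 1 ≠ 1 by omega, if_false,
      show i + (n - 1) + 1 = i + n by omega]
    exact hf.periodic i

end IsClosedWalk

end Relation

namespace GridOrientation

open Relation

variable {X Y : Type} {o : GridOrientation X Y}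

def transpose (o : GridOrientation X Y) : GridOrientation Y X := ⟨fun u v => o.out u.swap v.swap⟩

theorem adj_swap {u v : X × Y} : Adj u.swap v.swap ↔ Adj u v := by
  simp only [Adj, ne_eq, Prod.swap_inj, Prod.fst_swap, Prod.snd_swap, or_comm]

theorem isFaceSink_transpose {A : Finset Y} {B : Finset X} {v : Y × X} :
    o.transpose.IsFaceSink A B v ↔ o.IsFaceSink B A v.swap :=
  ⟨fun ⟨hA, hB, h⟩ => ⟨hB, hA, fun u hu₁ hu₂ => h u.swap hu₂ hu₁⟩,
    fun ⟨hB, hA, h⟩ => ⟨hA, hB, fun u hu₁ hu₂ => h u.swap hu₂ hu₁⟩⟩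

namespace IsOrientation

theorem transpose (hO : o.IsOrientation) : o.transpose.IsOrientation :=
  ⟨fun _ _ h => adj_swap.1 (hO.1 _ _ h), fun _ _ h => hO.2 _ _ (adj_swap.2 h)⟩

theorem out_irrefl (hO : o.IsOrientation) (v : X × Y) : ¬ o.out v v :=
  fun h => (hO.1 v v h).1 rfl

theorem out_asymm (hO : o.IsOrientation) {u v : X × Y} (h : o.out u v) : ¬ o.out v u :=
  (hO.2 u v (hO.1 u v h)).mp h

theorem out_of_not_out (hO : o.IsOrientation) {u v : X × Y} (huv : Adj u v)
    (h : ¬ o.out u v) : o.out v u :=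
  (hO.2 v u ⟨huv.1.symm, huv.2.imp Eq.symm Eq.symm⟩).mpr h

theorem out_row_of_not_out (hO : o.IsOrientation) {a a' : X} {b : Y} (ha : a ≠ a')
    (h : ¬ o.out (a, b) (a', b)) : o.out (a', b) (a, b) :=
  hO.out_of_not_out ⟨fun e => ha (congrArg Prod.fst e), Or.inr rfl⟩ h

theorem out_col_of_not_out (hO : o.IsOrientation) {a : X} {b b' : Y} (hb : b ≠ b')
    (h : ¬ o.out (a, b) (a, b')) : o.out (a, b') (a, b) :=
  hO.out_of_not_out ⟨fun e => hb (congrArg Prod.snd e), Or.inl rfl⟩ h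

theorem reflTransGen_of_not_out (hO : o.IsOrientation) {u w : X × Y}
    (h : u.1 = w.1 ∨ u.2 = w.2) (hout : ¬ o.out w u) :
    ReflTransGen (fun a b => o.out a b) u w := by
  by_cases huw : u = w
  · exact huw ▸ .refl
  · exact .single (hO.out_of_not_out ⟨Ne.symm huw, h.imp Eq.symm Eq.symm⟩ hout)

theorem isFaceSink_iff (hO : o.IsOrientation) {A : Finset X} {B : Finset Y} {v : X × Y} :
    o.IsFaceSink A B v ↔
      v.1 ∈ A ∧ v.2 ∈ B ∧ (∀ a ∈ A, ¬ o.out v (a, v.2)) ∧ ∀ b ∈ B, ¬ o.out v (v.1, b) := by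
  refine ⟨fun ⟨hA, hB, h⟩ => ⟨hA, hB, fun a ha => h _ ha hB, fun b hb => h _ hA hb⟩,
    fun ⟨hA, hB, hrow, hcol⟩ => ⟨hA, hB, fun u hu₁ hu₂ hout => ?_⟩⟩
  rcases (hO.1 _ _ hout).2 with h | h
  · exact hcol u.2 hu₂ (by rwa [h])
  · exact hrow u.1 hu₁ (by rwa [h])

end IsOrientation

namespace IsUSO

theorem transpose (huso : o.IsUSO) : o.transpose.IsUSO :=
  ⟨huso.1.transpose, fun A B hA hB =>
    ((Equiv.prodComm Y X).existsUnique_congr fun _ => isFaceSink_transpose).2 (huso.2 B A hB hA)⟩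

theorem out_trans_row (huso : o.IsUSO) {a₁ a₂ a₃ : X} {b : Y} (h₁₂ : o.out (a₁, b) (a₂, b))
    (h₂₃ : o.out (a₂, b) (a₃, b)) : o.out (a₁, b) (a₃, b) := by
  classical
  by_contra h₁₃
  have hne : a₁ ≠ a₃ := by
    rintro rfl
    exact huso.1.out_asymm h₁₂ h₂₃
  have h₃₁ := huso.1.out_row_of_not_out hne h₁₃
  obtain ⟨⟨s, t⟩, ⟨hs, ht, hsink⟩, -⟩ := huso.2 {a₁, a₂, a₃} {b} (by simp) (by simp)
  obtain rfl : t = b := by simpa using ht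
  simp only [Finset.mem_insert, Finset.mem_singleton] at hs
  rcases hs with rfl | rfl | rfl
  · exact hsink _ (by simp) (by simp) h₁₂
  · exact hsink _ (by simp) (by simp) h₂₃
  · exact hsink _ (by simp) (by simp) h₃₁

theorem out_trans_col (huso : o.IsUSO) {a : X} {b₁ b₂ b₃ : Y} (h₁₂ : o.out (a, b₁) (a, b₂))
    (h₂₃ : o.out (a, b₂) (a, b₃)) : o.out (a, b₁) (a, b₃) :=
  huso.transpose.out_trans_row (o := o.transpose) (b := a) h₁₂ h₂₃

theorem out_of_collinear (huso : o.IsUSO) {u v w : X × Y} (h₁ : o.out u v) (h₂ : o.out v w)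
    (h : (u.1 = v.1 ∧ v.1 = w.1) ∨ (u.2 = v.2 ∧ v.2 = w.2)) : o.out u w := by
  obtain ⟨a₁, b₁⟩ := u
  obtain ⟨a₂, b₂⟩ := v
  obtain ⟨a₃, b₃⟩ := w
  rcases h with ⟨rfl, rfl⟩ | ⟨rfl, rfl⟩
  · exact huso.out_trans_col h₁ h₂
  · exact huso.out_trans_row h₁ h₂

/-- Antiparallel row edges force parallel column edges: otherwise the square has two sinks or
a directed `4`-cycle. -/
theorem square (huso : o.IsUSO) {a a' : X} {b b' : Y} (h₁ : o.out (a, b) (a', b))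
    (h₂ : o.out (a', b') (a, b')) : o.out (a, b) (a, b') ↔ o.out (a', b) (a', b') := by
  classical
  have hO := huso.1
  have ha : a ≠ a' := fun h => hO.out_irrefl _ (h ▸ h₁)
  obtain ⟨⟨s, t⟩, ⟨hs, ht, hsink⟩, huniq⟩ := huso.2 {a, a'} {b, b'} (by simp) (by simp)
  constructor
  · intro h₃
    by_contra h₄
    have hb : b ≠ b' := fun h => hO.out_irrefl _ (h ▸ h₃)
    have h₄' := hO.out_col_of_not_out hb h₄
    have hsink₁ : o.IsFaceSink {a, a'} {b, b'} (a', b) := hO.isFaceSink_iff.2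
      ⟨by simp, by simp, by simp [hO.out_asymm h₁, hO.out_irrefl], by simp [h₄, hO.out_irrefl]⟩
    have hsink₂ : o.IsFaceSink {a, a'} {b, b'} (a, b') := hO.isFaceSink_iff.2
      ⟨by simp, by simp, by simp [hO.out_asymm h₂, hO.out_irrefl],
        by simp [hO.out_asymm h₃, hO.out_irrefl]⟩
    exact ha (congrArg Prod.fst ((huniq _ hsink₂).trans (huniq _ hsink₁).symm))
  · intro h₃
    by_contra h₄
    have hb : b ≠ b' := fun h => hO.out_irrefl _ (h ▸ h₃)
    have h₄' := hO.out_col_of_not_out hb h₄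
    simp only [Finset.mem_insert, Finset.mem_singleton] at hs ht
    rcases hs with rfl | rfl <;> rcases ht with rfl | rfl
    · exact hsink _ (by simp) (by simp) h₁
    · exact hsink _ (by simp) (by simp) h₄'
    · exact hsink _ (by simp) (by simp) h₃
    · exact hsink _ (by simp) (by simp) h₂

end IsUSO

section Staircase

variable {m : ℕ} {a : ℕ → X} {b : ℕ → Y}

/-- The closed walk `(a 0, b 0) → (a 1, b 0) → (a 1, b 1) → (a 2, b 1) → ⋯` of length `2 m`, which
cannot be shortened by replacing three consecutive edges with two. -/
structure IsStaircase (o : GridOrientation X Y) (m : ℕ) (a : ℕ → X) (b : ℕ → Y) : Prop where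
  pos : 0 < m
  periodic_a : Function.Periodic a m
  periodic_b : Function.Periodic b m
  out_row : ∀ j, o.out (a j, b j) (a (j + 1), b j)
  out_col : ∀ j, o.out (a (j + 1), b j) (a (j + 1), b (j + 1))
  no_shortcut_even : ∀ j z, o.out (a j, b j) z → ¬ o.out z (a (j + 2), b (j + 1))
  no_shortcut_odd : ∀ j z, o.out (a (j + 1), b j) z → ¬ o.out z (a (j + 2), b (j + 2))

namespace IsStaircase

theorem transpose (hs : o.IsStaircase m a b) :
    o.transpose.IsStaircase m b (fun j => a (j + 1)) :=
  ⟨hs.pos, hs.periodic_b, hs.periodic_a.add_const 1, hs.out_col, fun j => hs.out_row (j + 1),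
    fun j z => hs.no_shortcut_odd j z.swap, fun j z => hs.no_shortcut_even (j + 1) z.swap⟩

theorem fst_ne (huso : o.IsUSO) (hs : o.IsStaircase m a b) (j : ℕ) : a j ≠ a (j + 1) :=
  fun h => huso.1.out_irrefl _ (h ▸ hs.out_row j)

theorem out_sink (huso : o.IsUSO) (hs : o.IsStaircase m a b) {j : ℕ}
    (h : o.out (a j, b j) (a j, b (j + 1))) :
    o.out (a (j + 1), b (j + 1)) (a j, b (j + 1)) := by
  by_contra h'
  have h₁ := huso.1.out_row_of_not_out (hs.fst_ne huso j).symm h'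
  exact hs.no_shortcut_even j _ h (huso.out_trans_row h₁ (hs.out_row (j + 1)))

theorem out_source (huso : o.IsUSO) (hs : o.IsStaircase m a b) {j : ℕ}
    (h : ¬ o.out (a j, b j) (a j, b (j + 1))) :
    o.out (a j, b (j + 1)) (a (j + 1), b (j + 1)) := by
  by_contra h'
  have h₁ := huso.1.out_row_of_not_out (hs.fst_ne huso j) h'
  exact h ((huso.square (hs.out_row j) h₁).2 (hs.out_col j))

theorem out_even_iff_not_out_odd (huso : o.IsUSO) (hs : o.IsStaircase m a b) (j : ℕ) :
    o.out (a j, b j) (a j, b (j + 1)) ↔ ¬ o.out (a (j + 1), b j) (a (j + 2), b j) := by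
  have hO := huso.1
  constructor
  · intro heven hodd
    have hsink := hs.transpose.out_sink huso.transpose hodd
    have h₁ : o.out (a j, b j) (a (j + 2), b j) := huso.out_trans_row (hs.out_row j) hodd
    have hne : a j ≠ a (j + 2) := fun h => hO.out_irrefl _ (h ▸ h₁)
    by_cases h₂ : o.out (a j, b (j + 1)) (a (j + 2), b (j + 1))
    · exact hs.no_shortcut_even j _ heven h₂
    · have h₃ := huso.square h₁ (hO.out_row_of_not_out hne h₂)
      exact hO.out_asymm hsink (h₃.1 heven)
  · intro hodd
    by_contra heven
    have hsource := hs.transpose.out_source huso.transpose hodd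
    have h₁ : o.out (a j, b (j + 1)) (a (j + 2), b (j + 1)) :=
      huso.out_trans_row (hs.out_source huso heven) (hs.out_row (j + 1))
    have hne : a j ≠ a (j + 2) := fun h => hO.out_irrefl _ (h ▸ h₁)
    by_cases h₂ : o.out (a j, b j) (a (j + 2), b j)
    · exact hs.no_shortcut_even j _ h₂ hsource
    · have h₃ := huso.square (hO.out_row_of_not_out hne h₂) h₁
      exact heven (h₃.1 hsource)

theorem out_even_iff_succ (huso : o.IsUSO) (hs : o.IsStaircase m a b) (j : ℕ) :
    o.out (a j, b j) (a j, b (j + 1)) ↔ o.out (a (j + 1), b (j + 1)) (a (j + 1), b (j + 2)) :=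
  ((hs.out_even_iff_not_out_odd huso j).trans
    (not_congr (hs.transpose.out_even_iff_not_out_odd huso.transpose j))).trans not_not

theorem false_of_forall_out (huso : o.IsUSO) (hs : o.IsStaircase m a b)
    (hall : ∀ j, o.out (a j, b j) (a j, b (j + 1))) : False := by
  have hO := huso.1
  have key : ∀ k i, o.out (a i, b i) (a i, b (i + (k + 1))) := by
    intro k
    induction k with
    | zero => exact hall
    | succ k ih =>
      intro i
      have hnext : o.out (a (i + 1), b (i + 1)) (a (i + 1), b (i + (k + 2))) := by
        simpa [Nat.add_assoc, Nat.add_comm 1] using ih (i + 1)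
      by_cases h : o.out (a i, b (i + (k + 2))) (a (i + 1), b (i + (k + 2)))
      · have h' := (huso.square (hs.out_sink huso (hall i)) h).1 hnext
        exact huso.out_trans_col (hall i) h'
      · have h' := huso.square (hs.out_row i) (hO.out_row_of_not_out (hs.fst_ne huso i) h)
        exact h'.2 (huso.out_trans_col (hs.out_col i) hnext)
  have h := key (m - 1) 0
  rw [show 0 + (m - 1 + 1) = 0 + m by have := hs.pos; omega, hs.periodic_b 0] at h
  exact hO.out_irrefl _ h

theorem false (huso : o.IsUSO) (hs : o.IsStaircase m a b) : False := by
  by_cases h₀ : o.out (a 0, b 0) (a 0, b 1)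
  · refine hs.false_of_forall_out huso fun j => ?_
    induction j with
    | zero => exact h₀
    | succ j ih => exact (hs.out_even_iff_succ huso j).1 ih
  · have hall : ∀ j, ¬ o.out (a j, b j) (a j, b (j + 1)) := by
      intro j
      induction j with
      | zero => exact h₀
      | succ j ih => exact fun h => ih ((hs.out_even_iff_succ huso j).2 h)
    exact hs.transpose.false_of_forall_out huso.transpose fun j =>
      not_not.1 (mt (hs.out_even_iff_not_out_odd huso j).2 (hall j))

end IsStaircase

end Staircase

namespace IsUSO

variable {n : ℕ} {f : ℕ → X × Y}

theorem fst_eq_of_snd_eq (huso : o.IsUSO) (hf : IsClosedWalk (fun u v => o.out u v) n f)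
    (hsc : NoShortcut (fun u v => o.out u v) f) (i : ℕ) (h : (f i).2 = (f (i + 1)).2) :
    (f (i + 1)).1 = (f (i + 2)).1 :=
  (huso.1.1 _ _ (hf.rel (i + 1))).2.resolve_right fun h' =>
    hsc i _ (huso.out_of_collinear (hf.rel i) (hf.rel (i + 1)) (.inr ⟨h, h'⟩)) (hf.rel (i + 2))

theorem snd_eq_of_fst_eq (huso : o.IsUSO) (hf : IsClosedWalk (fun u v => o.out u v) n f)
    (hsc : NoShortcut (fun u v => o.out u v) f) (i : ℕ) (h : (f i).1 = (f (i + 1)).1) :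
    (f (i + 1)).2 = (f (i + 2)).2 :=
  (huso.1.1 _ _ (hf.rel (i + 1))).2.resolve_left fun h' =>
    hsc i _ (huso.out_of_collinear (hf.rel i) (hf.rel (i + 1)) (.inl ⟨h, h'⟩)) (hf.rel (i + 2))

theorem exists_isStaircase_of_snd_eq (huso : o.IsUSO)
    (hf : IsClosedWalk (fun u v => o.out u v) n f) (hsc : NoShortcut (fun u v => o.out u v) f)
    (h₀ : (f 0).2 = (f 1).2) : ∃ m a b, o.IsStaircase m a b := by
  have hturn : ∀ j, (f (2 * j)).2 = (f (2 * j + 1)).2 ∧ (f (2 * j + 1)).1 = (f (2 * j + 2)).1 := by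
    intro j
    induction j with
    | zero => exact ⟨h₀, huso.fst_eq_of_snd_eq hf hsc 0 h₀⟩
    | succ j ih =>
      have h := huso.snd_eq_of_fst_eq hf hsc (2 * j + 1) ih.2
      exact ⟨h, huso.fst_eq_of_snd_eq hf hsc _ h⟩
  obtain ⟨m, rfl⟩ : Even n := by
    by_contra hodd
    obtain ⟨m, rfl⟩ := Nat.not_even_iff_odd.1 hodd
    have e₀ : f (2 * m + 1) = f 0 := (congrArg f (by omega)).trans (hf.periodic 0)
    have e₁ : f (2 * m + 2) = f 1 := (congrArg f (by omega)).trans (hf.periodic 1)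
    have h₁ := (hturn m).2
    rw [e₀, e₁] at h₁
    exact huso.1.out_irrefl (f 0) (Prod.ext h₁ h₀ ▸ hf.rel 0)
  obtain ⟨a, b, hab⟩ : ∃ (a : ℕ → X) (b : ℕ → Y), ∀ j, f (2 * j) = (a j, b j) :=
    ⟨_, _, fun j => rfl⟩
  have hodd : ∀ j, f (2 * j + 1) = (a (j + 1), b j) := fun j =>
    Prod.ext (by rw [(hturn j).2]; exact (congrArg Prod.fst (hab (j + 1)) :))
      (by rw [← (hturn j).1, hab])
  have hper : ∀ j, f (2 * (j + m)) = f (2 * j) := fun j => by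
    rw [mul_add, two_mul m]
    exact hf.periodic (2 * j)
  refine ⟨m, a, b, ⟨by have := hf.pos; omega, fun j => ?_, fun j => ?_, fun j => ?_,
    fun j => ?_, fun j z => ?_, fun j z => ?_⟩⟩
  · simpa [hab] using congrArg Prod.fst (hper j)
  · simpa [hab] using congrArg Prod.snd (hper j)
  · rw [← hab, ← hodd]
    exact hf.rel (2 * j)
  · rw [← hodd, ← hab]
    exact hf.rel (2 * j + 1)
  · rw [← hab, ← hodd]
    exact hsc (2 * j) z
  · rw [← hodd, ← hab]
    exact hsc (2 * j + 1) z

theorem exists_isStaircase (huso : o.IsUSO) (hf : IsClosedWalk (fun u v => o.out u v) n f)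
    (hmin : ∀ m < n, ∀ g, ¬ IsClosedWalk (fun u v => o.out u v) m g) :
    ∃ m a b, o.IsStaircase m a b := by
  have hr : ∀ u v, o.out u v → ¬ o.out v u := fun _ _ => huso.1.out_asymm
  have hsc := hf.noShortcut hr hmin
  by_cases h₀ : (f 0).2 = (f 1).2
  · exact huso.exists_isStaircase_of_snd_eq hf hsc h₀
  · have h₁ := huso.snd_eq_of_fst_eq hf hsc 0 ((huso.1.1 _ _ (hf.rel 0)).2.resolve_right h₀)
    have hf' := hf.comp_add 1
    exact huso.exists_isStaircase_of_snd_eq hf' (hf'.noShortcut hr hmin) h₁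

theorem not_isClosedWalk (huso : o.IsUSO) (n : ℕ) (f : ℕ → X × Y) :
    ¬ IsClosedWalk (fun u v => o.out u v) n f := by
  induction n using Nat.strong_induction_on generalizing f with
  | _ n ih =>
    intro hf
    obtain ⟨m, a, b, hs⟩ := huso.exists_isStaircase hf ih
    exact hs.false huso

theorem not_reaches_self (huso : o.IsUSO) (v : X × Y) : ¬ o.Reaches v v := fun h =>
  let ⟨n, f, hf⟩ := h.exists_isClosedWalk
  huso.not_isClosedWalk n f hf

end IsUSO

end GridOrientation

theorem coord_in_outmap_of_reaches_general
    {X Y : Type} [Fintype X] [Fintype Y]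
    (o : GridOrientation X Y) (huso : o.IsUSO)
    (x : X) (y : Y) (w : X × Y)
    (h : o.Reaches w (x, y)) :
    x ∈ o.phiX w ∨ y ∈ o.phiY w := by
  classical
  have hO := huso.1
  by_contra hout
  simp only [GridOrientation.phiX, GridOrientation.phiY, Finset.mem_filter, Finset.mem_univ,
    true_and, not_or] at hout
  obtain ⟨hx, hy⟩ := hout
  by_cases hw : (x, y) = w
  · exact huso.not_reaches_self w (hw ▸ h)
  obtain ⟨s, -, huniq⟩ := huso.2 {w.1, x} {w.2, y} (by simp) (by simp)
  have hsink : o.IsFaceSink {w.1, x} {w.2, y} w := hO.isFaceSink_iff.2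
    ⟨by simp, by simp, by simp [hO.out_irrefl, hx], by simp [hO.out_irrefl, hy]⟩
  have hstep : o.out (x, y) (w.1, y) ∨ o.out (x, y) (x, w.2) := by
    by_contra hnone
    rw [not_or] at hnone
    have hsink' : o.IsFaceSink {w.1, x} {w.2, y} (x, y) := hO.isFaceSink_iff.2
      ⟨by simp, by simp, by simp [hO.out_irrefl, hnone.1], by simp [hO.out_irrefl, hnone.2]⟩
    exact hw ((huniq _ hsink').trans (huniq _ hsink).symm)
  rcases hstep with hstep | hstep
  · exact huso.not_reaches_self w
      (h.trans (.head' hstep (hO.reflTransGen_of_not_out (.inl rfl) hy)))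
  · exact huso.not_reaches_self w
      (h.trans (.head' hstep (hO.reflTransGen_of_not_out (.inr rfl) hx)))

/-- In a grid USO, if `w →⁺ v` for `v = (x, y)`, then at least one
coordinate of `v` belongs to the outmap of `w`: `x ∈ Φ_X(w)` or `y ∈ Φ_Y(w)`. -/
theorem coord_in_outmap_of_reaches
    {X Y : Type} [Fintype X] [Fintype Y] [DecidableEq X] [DecidableEq Y]
    (hX : 2 ≤ Fintype.card X) (hY : 2 ≤ Fintype.card Y)
    (o : GridOrientation X Y) (huso : o.IsUSO)
    (x : X) (y : Y) (w : X × Y)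
    (h : o.Reaches w (x, y)) :
    x ∈ o.phiX w ∨ y ∈ o.phiY w :=
  coord_in_outmap_of_reaches_general o huso x y w h
end

section
/- Let the grid on X, Y be endowed with a unique sink orientation, and let v, w be vertices. If there is no nonempty directed path from w to v (i.e. ¬(w →⁺ v)), then Φ_X(v) ⊇ Φ_X(w) or Φ_Y(v) ⊇ Φ_Y(w). -/
open Finset

/-- In a grid USO, if there is no nonempty directed path from `w`
to `v`, then `Φ_X(v) ⊇ Φ_X(w)` or `Φ_Y(v) ⊇ Φ_Y(w)`. -/
theorem outmap_superset_of_not_reaches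
    {X Y : Type} [Fintype X] [Fintype Y] [DecidableEq X] [DecidableEq Y]
    (hX : 2 ≤ Fintype.card X) (hY : 2 ≤ Fintype.card Y)
    (o : GridOrientation X Y) (huso : o.IsUSO)
    (v w : X × Y) (h : ¬ o.Reaches w v) :
    o.phiX w ⊆ o.phiX v ∨ o.phiY w ⊆ o.phiY v := by
  by_contra hcon
  push_neg at hcon
  obtain ⟨hXc, hYc⟩ := hcon
  rw [Finset.not_subset] at hXc hYc
  obtain ⟨x, hxw, hxv⟩ := hXc
  obtain ⟨y, hyw, hyv⟩ := hYc
  obtain ⟨v1, v2⟩ := v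
  obtain ⟨w1, w2⟩ := w
  simp only [GridOrientation.phiX, GridOrientation.phiY, Finset.mem_filter,
    Finset.mem_univ, true_and] at hxw hxv hyw hyv
  obtain ⟨⟨hdir, hflip⟩, hsink⟩ := huso
  -- basic facts
  have hself : ∀ a : X × Y, ¬ o.out a a = true := fun a ha => (hdir a a ha).1 rfl
  have flip : ∀ a b : X × Y, a ≠ b → (a.1 = b.1 ∨ a.2 = b.2) →
      ¬ o.out b a = true → o.out a b = true := by
    intro a b hne hco hba
    exact (hflip a b ⟨hne, hco⟩).mpr hba
  have hxw1 : x ≠ w1 := by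
    intro hh
    exact (hdir _ _ hxw).1 (by rw [hh])
  have hyw2 : y ≠ w2 := by
    intro hh
    exact (hdir _ _ hyw).1 (by rw [hh])
  apply h
  -- every vertex of the face {v1,x} × {v2,y} equals v or reaches v
  have r1 : (x, v2) = ((v1, v2) : X × Y) ∨ o.Reaches (x, v2) (v1, v2) := by
    by_cases hx1 : x = v1
    · exact Or.inl (by rw [hx1])
    · exact Or.inr (Relation.TransGen.single
        (flip (x, v2) (v1, v2) (by simp [hx1]) (Or.inr rfl) hxv))
  have r2 : (v1, y) = ((v1, v2) : X × Y) ∨ o.Reaches (v1, y) (v1, v2) := by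
    by_cases hy1 : y = v2
    · exact Or.inl (by rw [hy1])
    · exact Or.inr (Relation.TransGen.single
        (flip (v1, y) (v1, v2) (by simp [hy1]) (Or.inl rfl) hyv))
  have reachF : ∀ u : X × Y, (u.1 = v1 ∨ u.1 = x) → (u.2 = v2 ∨ u.2 = y) →
      u = (v1, v2) ∨ o.Reaches u (v1, v2) := by
    intro u hu1 hu2
    rcases hu1 with h1 | h1 <;> rcases hu2 with h2 | h2
    · exact Or.inl (Prod.ext h1 h2)
    · obtain rfl : u = (v1, y) := Prod.ext h1 h2
      exact r2
    · obtain rfl : u = (x, v2) := Prod.ext h1 h2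
      exact r1
    · obtain rfl : u = (x, y) := Prod.ext h1 h2
      by_cases hx1 : x = v1
      · rw [hx1]; exact r2
      by_cases hy1 : y = v2
      · rw [hy1]; exact r1
      by_cases e1 : o.out (x, y) (x, v2) = true
      · rcases r1 with he | hr
        · exact absurd (congrArg Prod.fst he) hx1
        · exact Or.inr (Relation.TransGen.head e1 hr)
      by_cases e2 : o.out (x, y) (v1, y) = true
      · rcases r2 with he | hr
        · exact absurd (congrArg Prod.snd he) hy1
        · exact Or.inr (Relation.TransGen.head e2 hr)
      -- otherwise two sinks in {v1,x} × {v2,y}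
      exfalso
      obtain ⟨s, -, huniq⟩ := hsink {v1, x} {v2, y}
        ⟨v1, Finset.mem_insert_self _ _⟩ ⟨v2, Finset.mem_insert_self _ _⟩
      have hs1 : o.IsFaceSink {v1, x} {v2, y} (x, y) := by
        refine ⟨by simp, by simp, ?_⟩
        intro u hu1 hu2
        simp only [Finset.mem_insert, Finset.mem_singleton] at hu1 hu2
        rcases hu1 with h1 | h1 <;> rcases hu2 with h2 | h2
        · obtain rfl : u = (v1, v2) := Prod.ext h1 h2
          intro hout
          rcases (hdir _ _ hout).2 with hc | hc
          · exact hx1 hc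
          · exact hy1 hc
        · obtain rfl : u = (v1, y) := Prod.ext h1 h2
          exact e2
        · obtain rfl : u = (x, v2) := Prod.ext h1 h2
          exact e1
        · obtain rfl : u = (x, y) := Prod.ext h1 h2
          exact hself _
      have hs2 : o.IsFaceSink {v1, x} {v2, y} (v1, v2) := by
        refine ⟨by simp, by simp, ?_⟩
        intro u hu1 hu2
        simp only [Finset.mem_insert, Finset.mem_singleton] at hu1 hu2
        rcases hu1 with h1 | h1 <;> rcases hu2 with h2 | h2
        · obtain rfl : u = (v1, v2) := Prod.ext h1 h2
          exact hself _
        · obtain rfl : u = (v1, y) := Prod.ext h1 h2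
          exact hyv
        · obtain rfl : u = (x, v2) := Prod.ext h1 h2
          exact hxv
        · obtain rfl : u = (x, y) := Prod.ext h1 h2
          intro hout
          rcases (hdir _ _ hout).2 with hc | hc
          · exact hx1 hc.symm
          · exact hy1 hc.symm
      have heq := (huniq _ hs1).trans (huniq _ hs2).symm
      exact hx1 (congrArg Prod.fst heq)
  -- helper: go from w into the face F and then to v
  have viaF : ∀ t : X × Y, (t.1 = v1 ∨ t.1 = x) → (t.2 = v2 ∨ t.2 = y) →
      o.Reaches (w1, w2) t → o.Reaches (w1, w2) (v1, v2) := by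
    intro t ht1 ht2 hwt
    rcases reachF t ht1 ht2 with he | hr
    · rwa [he] at hwt
    · exact hwt.trans hr
  -- column face {x} × {v2, y, w2}
  obtain ⟨⟨t1, t2⟩, ⟨ht1, ht2, ht3⟩, -⟩ := hsink {x} ({v2, y, w2} : Finset Y)
    ⟨x, Finset.mem_singleton_self _⟩ ⟨v2, Finset.mem_insert_self _ _⟩
  simp only [Finset.mem_singleton, Finset.mem_insert] at ht1 ht2
  subst t1
  have colStep : w2 ≠ t2 → o.Reaches (w1, w2) (x, t2) := by
    intro hw2
    refine Relation.TransGen.head hxw (Relation.TransGen.single ?_)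
    exact flip (x, w2) (x, t2) (by simp [hw2]) (Or.inl rfl)
      (ht3 (x, w2) (by simp) (by simp))
  have colReach : ∀ c : Y, t2 = c → (c = v2 ∨ c = y) → o.Reaches (w1, w2) (v1, v2) := by
    intro c hc hcF
    subst c
    by_cases hw2 : w2 = t2
    · exact viaF (x, t2) (Or.inr rfl) hcF
        (Relation.TransGen.single (by rw [← hw2]; exact hxw))
    · exact viaF (x, t2) (Or.inr rfl) hcF (colStep (fun hh => hw2 hh))
  have colCase : (¬ o.out (x, w2) (x, y) = true) ∨ o.Reaches (w1, w2) (v1, v2) := by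
    rcases ht2 with h2 | h2 | h2
    · exact Or.inr (colReach v2 h2 (Or.inl rfl))
    · exact Or.inr (colReach y h2 (Or.inr rfl))
    · subst t2
      exact Or.inl (ht3 (x, y) (by simp) (by simp))
  rcases colCase with b1 | done
  swap
  · exact done
  -- row face {v1, x, w1} × {y}
  obtain ⟨⟨s1, s2⟩, ⟨hs1, hs2, hs3⟩, -⟩ := hsink ({v1, x, w1} : Finset X) {y}
    ⟨v1, Finset.mem_insert_self _ _⟩ ⟨y, Finset.mem_singleton_self _⟩
  simp only [Finset.mem_singleton, Finset.mem_insert] at hs1 hs2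
  subst s2
  have rowStep : w1 ≠ s1 → o.Reaches (w1, w2) (s1, y) := by
    intro hw1
    refine Relation.TransGen.head hyw (Relation.TransGen.single ?_)
    exact flip (w1, y) (s1, y) (by simp [hw1]) (Or.inr rfl)
      (hs3 (w1, y) (by simp) (by simp))
  have rowReach : ∀ c : X, s1 = c → (c = v1 ∨ c = x) → o.Reaches (w1, w2) (v1, v2) := by
    intro c hc hcF
    subst c
    by_cases hw1 : w1 = s1
    · exact viaF (s1, y) hcF (Or.inr rfl)
        (Relation.TransGen.single (by rw [← hw1]; exact hyw))
    · exact viaF (s1, y) hcF (Or.inr rfl) (rowStep (fun hh => hw1 hh))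
  have rowCase : (¬ o.out (w1, y) (x, y) = true) ∨ o.Reaches (w1, w2) (v1, v2) := by
    rcases hs1 with h1 | h1 | h1
    · exact Or.inr (rowReach v1 h1 (Or.inl rfl))
    · exact Or.inr (rowReach x h1 (Or.inr rfl))
    · subst s1
      exact Or.inl (hs3 (x, y) (by simp) (by simp))
  rcases rowCase with b2 | done
  swap
  · exact done
  -- 2x2 face {w1, x} × {w2, y} has two sinks: contradiction
  exfalso
  obtain ⟨s, -, huniq⟩ := hsink ({w1, x} : Finset X) ({w2, y} : Finset Y)
    ⟨w1, Finset.mem_insert_self _ _⟩ ⟨w2, Finset.mem_insert_self _ _⟩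
  have hd1 : o.IsFaceSink {w1, x} {w2, y} (x, w2) := by
    refine ⟨by simp, by simp, ?_⟩
    intro u hu1 hu2
    simp only [Finset.mem_insert, Finset.mem_singleton] at hu1 hu2
    rcases hu1 with h1 | h1 <;> rcases hu2 with h2 | h2
    · obtain rfl : u = (w1, w2) := Prod.ext h1 h2
      exact (hflip _ _ (hdir _ _ hxw)).mp hxw
    · obtain rfl : u = (w1, y) := Prod.ext h1 h2
      intro hout
      rcases (hdir _ _ hout).2 with hc | hc
      · exact hxw1 hc
      · exact hyw2 hc.symm
    · obtain rfl : u = (x, w2) := Prod.ext h1 h2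
      exact hself _
    · obtain rfl : u = (x, y) := Prod.ext h1 h2
      exact b1
  have hd2 : o.IsFaceSink {w1, x} {w2, y} (w1, y) := by
    refine ⟨by simp, by simp, ?_⟩
    intro u hu1 hu2
    simp only [Finset.mem_insert, Finset.mem_singleton] at hu1 hu2
    rcases hu1 with h1 | h1 <;> rcases hu2 with h2 | h2
    · obtain rfl : u = (w1, w2) := Prod.ext h1 h2
      exact (hflip _ _ (hdir _ _ hyw)).mp hyw
    · obtain rfl : u = (w1, y) := Prod.ext h1 h2
      exact hself _
    · obtain rfl : u = (x, w2) := Prod.ext h1 h2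
      intro hout
      rcases (hdir _ _ hout).2 with hc | hc
      · exact hxw1 hc.symm
      · exact hyw2 hc
    · obtain rfl : u = (x, y) := Prod.ext h1 h2
      exact b2
  have heq := (huniq _ hd1).trans (huniq _ hd2).symm
  exact hxw1 (congrArg Prod.fst heq)
end

section
/- Let the grid on X, Y be endowed with a unique sink orientation, let i ≥ 1 be an integer, and let w be a vertex with refined out-degree (2^{i−1}, 2^{i−1}). Then for every vertex u such that there is no nonempty directed path from w to u (i.e. ¬(w →⁺ u)), one has |Φ(u) ∩ Φ(w)| ≥ 2^{i−1}. -/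
open Finset

/-!
If there are `x ∈ Φ_X(w) \ Φ_X(u)` and `y ∈ Φ_Y(w) \ Φ_Y(u)`, then `w →⁺ (x, y)` and
`(x, y)` reaches `u` (or equals it), each time because a `2 × 2` face has only one sink.
So when `w` does not reach `u`, `Φ_X(w) ⊆ Φ_X(u)` or `Φ_Y(w) ⊆ Φ_Y(u)`, and either inclusion
alone gives `2^(i-1)` common out-directions.
-/

namespace GridOrientation

variable {X Y : Type} {o : GridOrientation X Y}

lemma not_out_self (ho : o.IsOrientation) (v : X × Y) : ¬ o.out v v = true :=
  fun h => (ho.1 v v h).1 rfl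

lemma not_out_of_out (ho : o.IsOrientation) {u v : X × Y} (h : o.out u v = true) :
    ¬ o.out v u = true :=
  (ho.2 u v (ho.1 u v h)).1 h

lemma out_of_not_out_of_snd_eq (ho : o.IsOrientation) {u v : X × Y} (hne : v ≠ u)
    (h2 : v.2 = u.2) (h : ¬ o.out u v = true) : o.out v u = true := by
  by_contra hvu
  exact h ((ho.2 u v ⟨hne.symm, Or.inr h2.symm⟩).2 hvu)

lemma out_of_not_out_of_fst_eq (ho : o.IsOrientation) {u v : X × Y} (hne : v ≠ u)
    (h1 : v.1 = u.1) (h : ¬ o.out u v = true) : o.out v u = true := by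
  by_contra hvu
  exact h ((ho.2 u v ⟨hne.symm, Or.inl h1.symm⟩).2 hvu)

/-- The corner `(x, y)` opposite `v` is adjacent to `v` only when it coincides with
`(x, v.2)` or `(v.1, y)`. -/
lemma isFaceSink_square [DecidableEq X] [DecidableEq Y] (ho : o.IsOrientation) {v : X × Y}
    {x : X} {y : Y}
    (hx : ¬ o.out v (x, v.2) = true) (hy : ¬ o.out v (v.1, y) = true) :
    o.IsFaceSink {v.1, x} {v.2, y} v := by
  refine ⟨by simp, by simp, ?_⟩
  rintro ⟨a, b⟩ ha hb hout
  have hadj := ho.1 _ _ hout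
  simp only [Finset.mem_insert, Finset.mem_singleton] at ha hb
  rcases ha with rfl | rfl <;> rcases hb with rfl | rfl
  · exact hadj.1 rfl
  · exact hy hout
  · exact hx hout
  · rcases hadj.2 with h | h <;> dsimp only at h
    · exact hy (by rwa [h])
    · exact hx (by rwa [h])

lemma eq_of_not_out_square [DecidableEq X] [DecidableEq Y] (huso : o.IsUSO) {u v : X × Y}
    (hv₁ : ¬ o.out v (u.1, v.2) = true) (hv₂ : ¬ o.out v (v.1, u.2) = true)
    (hu₁ : ¬ o.out u (v.1, u.2) = true) (hu₂ : ¬ o.out u (u.1, v.2) = true) : v = u := by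
  have hv := isFaceSink_square huso.1 hv₁ hv₂
  have hu := isFaceSink_square huso.1 hu₁ hu₂
  rw [Finset.pair_comm u.1, Finset.pair_comm u.2] at hu
  exact (huso.2 _ _ (Finset.insert_nonempty _ _) (Finset.insert_nonempty _ _)).unique hv hu

/-- One of `(x, w.2)`, `(w.1, y)` points to `(x, y)`: otherwise both would be sinks of the
square spanned by `w` and `(x, y)`. -/
lemma reaches_of_out_of_out [DecidableEq X] [DecidableEq Y] (huso : o.IsUSO) {w : X × Y}
    {x : X} {y : Y}
    (hx : o.out w (x, w.2) = true) (hy : o.out w (w.1, y) = true) :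
    o.Reaches w (x, y) := by
  by_cases hxy : o.out (x, w.2) (x, y) = true
  · exact .tail (.single hx) hxy
  by_cases hyx : o.out (w.1, y) (x, y) = true
  · exact .tail (.single hy) hyx
  have heq : ((x, w.2) : X × Y) = (w.1, y) :=
    eq_of_not_out_square huso (not_out_of_out huso.1 hx) hxy hyx (not_out_of_out huso.1 hy)
  obtain rfl : x = w.1 := congrArg Prod.fst heq
  exact absurd hx (not_out_self huso.1 w)

/-- `u` is the sink of the square spanned by `u` and `v`, so `v` is not and has an out-edge,
which leads on to `u`. -/
lemma reflTransGen_of_not_out_of_not_out [DecidableEq X] [DecidableEq Y]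
    (huso : o.IsUSO) {u v : X × Y}
    (hx : ¬ o.out u (v.1, u.2) = true) (hy : ¬ o.out u (u.1, v.2) = true) :
    Relation.ReflTransGen (fun a b => o.out a b = true) v u := by
  have toward_u : ∀ a : X × Y, ¬ o.out u a = true → a.1 = u.1 ∨ a.2 = u.2 →
      Relation.ReflTransGen (fun a b => o.out a b = true) a u := by
    intro a hua ha
    by_cases hau : a = u
    · exact hau ▸ .refl
    rcases ha with h | h
    · exact .single (out_of_not_out_of_fst_eq huso.1 hau h hua)
    · exact .single (out_of_not_out_of_snd_eq huso.1 hau h hua)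
  by_cases hv₁ : o.out v (v.1, u.2) = true
  · exact .head hv₁ (toward_u _ hx (Or.inr rfl))
  by_cases hv₂ : o.out v (u.1, v.2) = true
  · exact .head hv₂ (toward_u _ hy (Or.inl rfl))
  exact eq_of_not_out_square huso hv₂ hv₁ hx hy ▸ .refl

@[simp]
lemma mem_phiX [Fintype X] {v : X × Y} {x : X} : x ∈ o.phiX v ↔ o.out v (x, v.2) = true := by
  simp [phiX]

@[simp]
lemma mem_phiY [Fintype Y] {v : X × Y} {y : Y} : y ∈ o.phiY v ↔ o.out v (v.1, y) = true := by
  simp [phiY]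

lemma card_phi_inter [Fintype X] [Fintype Y] [DecidableEq X] [DecidableEq Y] (u w : X × Y) :
    (o.phi u ∩ o.phi w).card = (o.phiX u ∩ o.phiX w).card + (o.phiY u ∩ o.phiY w).card := by
  have h : o.phi u ∩ o.phi w = (o.phiX u ∩ o.phiX w).disjSum (o.phiY u ∩ o.phiY w) := by
    ext c; cases c <;> simp [phi]
  rw [h, Finset.card_disjSum]

lemma phiX_subset_or_phiY_subset_of_not_reaches [Fintype X] [Fintype Y] [DecidableEq X]
    [DecidableEq Y] (huso : o.IsUSO) {u w : X × Y}
    (h : ¬ o.Reaches w u) : o.phiX w ⊆ o.phiX u ∨ o.phiY w ⊆ o.phiY u := by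
  by_contra! hsub
  obtain ⟨⟨x, hxw, hxu⟩, ⟨y, hyw, hyu⟩⟩ :=
    And.imp Finset.not_subset.1 Finset.not_subset.1 hsub
  rw [mem_phiX] at hxw hxu
  rw [mem_phiY] at hyw hyu
  exact h ((reaches_of_out_of_out huso hxw hyw).trans_left
    (reflTransGen_of_not_out_of_not_out huso (v := (x, y)) hxu hyu))

end GridOrientation

theorem card_inter_outmaps_ge_general
    {X Y : Type} [Fintype X] [Fintype Y] [DecidableEq X] [DecidableEq Y]
    (o : GridOrientation X Y) (huso : o.IsUSO)
    (i : ℕ) (w : X × Y)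
    (hw : (o.phiX w).card = 2 ^ (i - 1) ∧ (o.phiY w).card = 2 ^ (i - 1)) :
    ∀ u : X × Y, ¬ o.Reaches w u → 2 ^ (i - 1) ≤ (o.phi u ∩ o.phi w).card := by
  intro u hu
  rw [GridOrientation.card_phi_inter]
  rcases o.phiX_subset_or_phiY_subset_of_not_reaches huso hu with hX | hY
  · rw [Finset.inter_eq_right.2 hX]
    omega
  · rw [Finset.inter_eq_right.2 hY]
    omega

/-- In a grid USO, if `w` has refined out-degree
`(2^(i-1), 2^(i-1))` (`i ≥ 1`), then every vertex `u` with no nonempty directed path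
from `w` to `u` satisfies `|Φ(u) ∩ Φ(w)| ≥ 2^(i-1)`. -/
theorem card_inter_outmaps_ge
    {X Y : Type} [Fintype X] [Fintype Y] [DecidableEq X] [DecidableEq Y]
    (hX : 2 ≤ Fintype.card X) (hY : 2 ≤ Fintype.card Y)
    (o : GridOrientation X Y) (huso : o.IsUSO)
    (i : ℕ) (hi : 1 ≤ i) (w : X × Y)
    (hw : (o.phiX w).card = 2 ^ (i - 1) ∧ (o.phiY w).card = 2 ^ (i - 1)) :
    ∀ u : X × Y, ¬ o.Reaches w u → 2 ^ (i - 1) ≤ (o.phi u ∩ o.phi w).card :=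
  card_inter_outmaps_ge_general o huso i w hw
end
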